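/- Let n ∈ ℕ and a_1, …, a_n ∈ ℤ/4ℤ, and define the linear function f : {0,1}^n → ℤ/4ℤ by f(x) = Σ_{i=1}^n a_i·x_i (computed in ℤ/4ℤ, with the coordinates x_i ∈ {0,1} regarded as elements of ℤ/4ℤ). Then the integer |N_0(f) − N_2(f)| is either 0 or a power of 2 (i.e., equals 2^k for some k ∈ ℕ), and likewise |N_1(f) − N_3(f)| is either 0 or a power of 2. -/

import Mathlib

/-!
Put `S = ∑ₓ i ^ f(x)` in the Gaussian integers. Its real part is `N₀ - N₂` and its imaginary part
is `N₁ - N₃`. Since `f` is linear, `S` factors as `∏ⱼ (1 + i ^ aⱼ)`, and each factor is one of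
`2 = i³(1 + i)²`, `1 + i`, `0`, `1 - i = i³(1 + i)`. Hence `S = 0` or `S = iᵗ(1 + i)ᵐ`, and since
`(1 + i)² = 2i` this is `2ᵏ` times one of `±1, ±i, ±1 ± i`, whose coordinates are `0` or `±2ᵏ`.
-/

/-- `Ncount n f c` is the number of 0-1 vectors `x` with `f x = c` in `ℤ/4ℤ`. -/
def Ncount (n : ℕ) (f : (Fin n → Fin 2) → ZMod 4) (c : ZMod 4) : ℕ :=
  (Finset.univ.filter fun x => f x = c).card

open Finset

local notation "ℤ[i]" => GaussianInt
local notation "𝐢" => (Zsqrtd.sqrtd : GaussianInt)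

namespace AddChar

lemma map_sum_eq_prod {A M ι : Type*} [AddCommMonoid A] [CommMonoid M] (ψ : AddChar A M)
    (s : Finset ι) (g : ι → A) : ψ (∑ i ∈ s, g i) = ∏ i ∈ s, ψ (g i) := by
  induction s using Finset.cons_induction with
  | empty => simp
  | cons i s hi ih => rw [sum_cons, prod_cons, map_add_eq_mul, ih]

lemma sum_boolean_cube_linear_eq_prod {R S ι : Type*} [Semiring R] [CommSemiring S] [Fintype ι]
    [DecidableEq ι] (ψ : AddChar R S) (a : ι → R) :
    ∑ x : ι → Fin 2, ψ (∑ i, a i * ((x i : ℕ) : R)) = ∏ i, (1 + ψ (a i)) := by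
  simp_rw [map_sum_eq_prod]
  rw [← Fintype.prod_sum fun i (j : Fin 2) => ψ (a i * ((j : ℕ) : R))]
  simp [Fin.sum_univ_two]

end AddChar

lemma prod_eq_zero_or_eq_pow_mul_pow {M ι : Type*} [CommMonoidWithZero M] (u v : M)
    (s : Finset ι) (g : ι → M) (hg : ∀ i ∈ s, g i = 0 ∨ ∃ t m : ℕ, g i = u ^ t * v ^ m) :
    ∏ i ∈ s, g i = 0 ∨ ∃ t m : ℕ, ∏ i ∈ s, g i = u ^ t * v ^ m := by
  refine prod_induction _ (fun z => z = 0 ∨ ∃ t m : ℕ, z = u ^ t * v ^ m) ?_ ?_ hg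
  · rintro z w (rfl | ⟨t, m, rfl⟩) hw
    · exact Or.inl (zero_mul w)
    obtain rfl | ⟨t', m', rfl⟩ := hw
    · exact Or.inl (mul_zero _)
    exact Or.inr ⟨t + t', m + m', by rw [pow_add, pow_add, mul_mul_mul_comm]⟩
  · exact Or.inr ⟨0, 0, by simp⟩

lemma abs_two_pow_mul_eq_zero_or_two_pow (k : ℕ) {r : ℤ} (hr : |r| ≤ 1) :
    |2 ^ k * r| = 0 ∨ ∃ j : ℕ, |2 ^ k * r| = 2 ^ j := by
  rw [abs_mul, abs_pow, abs_two]
  obtain h | h : |r| = 0 ∨ |r| = 1 := by have := abs_nonneg r; omega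
  · simp [h]
  · exact Or.inr ⟨k, by simp [h]⟩

namespace GaussianInt

def iPowChar : AddChar (ZMod 4) ℤ[i] where
  toFun c := 𝐢 ^ c.val
  map_zero_eq_one' := rfl
  map_add_eq_mul' := by decide

lemma sum_iPowChar_comp {α : Type*} [Fintype α] (f : α → ZMod 4) :
    ∑ x, iPowChar (f x) =
      ⟨#{x | f x = 0} - #{x | f x = 2}, #{x | f x = 1} - #{x | f x = 3}⟩ := by
  have hfiber (c : ZMod 4) : ∑ x with f x = c, iPowChar (f x) = #{x | f x = c} • iPowChar c := by
    rw [sum_congr rfl fun x hx => by rw [(mem_filter.mp hx).2], sum_const]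
  have hvalues : iPowChar 0 = ⟨1, 0⟩ ∧ iPowChar 1 = ⟨0, 1⟩ ∧ iPowChar 2 = ⟨-1, 0⟩ ∧
      iPowChar 3 = ⟨0, -1⟩ := by decide
  obtain ⟨h0, h1, h2, h3⟩ := hvalues
  have hsum_four (g : ZMod 4 → ℤ[i]) : ∑ c, g c = g 0 + g 1 + g 2 + g 3 := Fin.sum_univ_four g
  rw [← sum_fiberwise univ f, Fintype.sum_congr _ _ hfiber, hsum_four]
  ext <;> simp [h0, h1, h2, h3] <;> ring

lemma one_add_iPowChar (c : ZMod 4) :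
    1 + iPowChar c = 0 ∨ ∃ t m : ℕ, 1 + iPowChar c = 𝐢 ^ t * (1 + 𝐢) ^ m := by
  fin_cases c
  · exact Or.inr ⟨3, 2, by decide⟩
  · exact Or.inr ⟨0, 1, by decide⟩
  · exact Or.inl (by decide)
  · exact Or.inr ⟨3, 1, by decide⟩

lemma sqrtd_pow_mul_one_add_sqrtd_pow_eq_two_pow_mul (t m : ℕ) :
    ∃ k : ℕ, ∃ u : ℤ[i], 𝐢 ^ t * (1 + 𝐢) ^ m = (2 ^ k : ℤ) * u ∧ |u.re| ≤ 1 ∧ |u.im| ≤ 1 := by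
  have hsq : (1 + 𝐢) ^ 2 = 2 * 𝐢 := by decide
  have hsplit : 𝐢 ^ t * (1 + 𝐢) ^ m =
      (2 ^ (m / 2) : ℤ) * (𝐢 ^ ((t + m / 2) % 4) * (1 + 𝐢) ^ (m % 2)) := by
    rw [← pow_eq_pow_mod _ (by decide : 𝐢 ^ 4 = 1)]
    conv_lhs => rw [← Nat.div_add_mod m 2, pow_add, pow_mul, hsq]
    push_cast
    ring
  refine ⟨m / 2, _, hsplit, ?_⟩
  have ht : (t + m / 2) % 4 < 4 := Nat.mod_lt _ (by norm_num)
  have hm : m % 2 < 2 := Nat.mod_lt _ (by norm_num)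
  generalize (t + m / 2) % 4 = t' at ht
  generalize m % 2 = m' at hm
  interval_cases t' <;> interval_cases m' <;> decide

lemma abs_re_im_eq_zero_or_two_pow {z : ℤ[i]}
    (hz : z = 0 ∨ ∃ t m : ℕ, z = 𝐢 ^ t * (1 + 𝐢) ^ m) :
    (|z.re| = 0 ∨ ∃ k : ℕ, |z.re| = 2 ^ k) ∧ (|z.im| = 0 ∨ ∃ k : ℕ, |z.im| = 2 ^ k) := by
  obtain rfl | ⟨t, m, rfl⟩ := hz
  · simp
  obtain ⟨k, u, hu, hre, him⟩ := sqrtd_pow_mul_one_add_sqrtd_pow_eq_two_pow_mul t m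
  rw [hu, Zsqrtd.re_smul, Zsqrtd.im_smul]
  exact ⟨abs_two_pow_mul_eq_zero_or_two_pow k hre, abs_two_pow_mul_eq_zero_or_two_pow k him⟩

end GaussianInt

open GaussianInt in
theorem stmt_0 (n : ℕ) (a : Fin n → ZMod 4)
    (f : (Fin n → Fin 2) → ZMod 4)
    (hf : ∀ x, f x = ∑ i, a i * ((x i : ℕ) : ZMod 4)) :
    ((|(Ncount n f 0 : ℤ) - (Ncount n f 2 : ℤ)| = 0 ∨
        ∃ k : ℕ, |(Ncount n f 0 : ℤ) - (Ncount n f 2 : ℤ)| = 2 ^ k) ∧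
      (|(Ncount n f 1 : ℤ) - (Ncount n f 3 : ℤ)| = 0 ∨
        ∃ k : ℕ, |(Ncount n f 1 : ℤ) - (Ncount n f 3 : ℤ)| = 2 ^ k)) := by
  have hS : ∑ x, iPowChar (f x) = ∏ i, (1 + iPowChar (a i)) := by
    simp only [hf]
    exact iPowChar.sum_boolean_cube_linear_eq_prod a
  have hS_shape := prod_eq_zero_or_eq_pow_mul_pow 𝐢 (1 + 𝐢) univ _
    fun i _ => one_add_iPowChar (a i)
  rw [← hS, sum_iPowChar_comp] at hS_shape
  exact abs_re_im_eq_zero_or_two_pow hS_shape
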